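/- arXiv:1701.09142 — 7 statements merged into one kernel-verified Lean document; each statement's English description precedes it below -/
import Mathlib

section
/- A betting function R is coherent if and only if its buy function satisfies: (i) Buy_R(X) ≥ min_{ω∈Ω} X(ω) for all X; (ii) Buy_R(λX) = λ·Buy_R(X) for all λ > 0; (iii) Buy_R(X+Y) ≥ Buy_R(X) + Buy_R(Y) for all X, Y. -/
open scoped Classical

variable {Ω : Type*}

/-- A betting function: for each bet `X` there is a threshold `α₀` such that the
agent rejects `X + α` for `α < α₀` and accepts it for `α ≥ α₀`. -/
def IsBettingFunction (R : (Ω → ℝ) → Bool) : Prop :=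
  ∀ X : Ω → ℝ, ∃ α₀ : ℝ,
    (∀ α : ℝ, α < α₀ → R (fun ω => X ω + α) = false) ∧
    (∀ α : ℝ, α₀ ≤ α → R (fun ω => X ω + α) = true)

/-- The buy function: maximum price the agent pays for `X`. -/
noncomputable def Buy (R : (Ω → ℝ) → Bool) (X : Ω → ℝ) : ℝ :=
  sSup {α : ℝ | R (fun ω => X ω - α) = true}

/-- The sell function: minimum price at which the agent sells `X`. -/
noncomputable def Sell (R : (Ω → ℝ) → Bool) (X : Ω → ℝ) : ℝ :=
  sInf {α : ℝ | R (fun ω => α - X ω) = true}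

/-- Coherence of a betting function. -/
def Coherent (R : (Ω → ℝ) → Bool) : Prop :=
  (∀ X : Ω → ℝ, (∀ ω, 0 < X ω) → R X = true) ∧
  (∀ (X : Ω → ℝ) (c : ℝ), 0 < c → R (fun ω => c * X ω) = R X) ∧
  (∀ X Y : Ω → ℝ, R X = true → R Y = true → R (fun ω => X ω + Y ω) = true)

/-- Indicator bet of a set. -/
noncomputable def ind (A : Set Ω) : Ω → ℝ := A.indicator fun _ => 1

/-- A belief valuation. -/
def BeliefValuation (B : Set Ω → Bool) : Prop :=
  (∀ A : Set Ω, B A = true → B Aᶜ = false) ∧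
  (∀ A C : Set Ω, B A = true → A ⊆ C → B C = true) ∧
  (∀ A C : Set Ω, B A = true → B C = true → B (A ∩ C) = true) ∧
  B Set.univ = true

/-- Guaranteed revenue of a bet under a belief valuation. -/
noncomputable def GB (B : Set Ω → Bool) (X : Ω → ℝ) : ℝ :=
  sSup ((fun A => sInf (X '' A)) '' {A | B A = true})

/-- P-consistency: compare guaranteed revenues of combined bets. -/
def PConsistent (R : (Ω → ℝ) → Bool) : Prop :=
  ∀ (N M : ℕ) (X : Fin N → Ω → ℝ) (Y : Fin M → Ω → ℝ),
    (∀ E : Set Ω, E.Nonempty →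
      sInf ((fun ω => ∑ i, X i ω) '' E) ≤ sInf ((fun ω => ∑ j, Y j ω) '' E)) →
    ∑ i, Buy R (X i) ≤ ∑ j, Buy R (Y j)

/-- B-consistency: compare sums of guaranteed revenues of individual bets. -/
def BConsistent (R : (Ω → ℝ) → Bool) : Prop :=
  ∀ (N M : ℕ) (X : Fin N → Ω → ℝ) (Y : Fin M → Ω → ℝ),
    (∀ E : Set Ω, E.Nonempty →
      ∑ i, sInf (X i '' E) ≤ ∑ j, sInf (Y j '' E)) →
    ∑ i, Buy R (X i) ≤ ∑ j, Buy R (Y j)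

/-- A (finitely additive) probability distribution with values in `[0,1]`. -/
def IsProbDist (P : Set Ω → ℝ) : Prop :=
  (∀ A : Set Ω, 0 ≤ P A ∧ P A ≤ 1) ∧ P ∅ = 0 ∧ P Set.univ = 1 ∧
  ∀ A C : Set Ω, P (A ∪ C) = P A + P C - P (A ∩ C)

/-- A basic belief assignment. -/
def IsBBA [Fintype Ω] (m : Finset Ω → ℝ) : Prop :=
  (∀ S : Finset Ω, 0 ≤ m S ∧ m S ≤ 1) ∧ m ∅ = 0 ∧ ∑ S : Finset Ω, m S = 1

/-- Choquet integral of `X` with respect to the bba `m`. -/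
noncomputable def Choquet [Fintype Ω] (m : Finset Ω → ℝ) (X : Ω → ℝ) : ℝ :=
  ∑ S : Finset Ω, m S * sInf (X '' (S : Set Ω))

/-- The belief function induced by a bba. -/
noncomputable def BelOf [Fintype Ω] (m : Finset Ω → ℝ) (A : Set Ω) : ℝ :=
  ∑ S ∈ Finset.univ.filter (fun S : Finset Ω => (S : Set Ω) ⊆ A), m S

/-- Complete monotonicity (condition (B2)). -/
def CompletelyMonotone (Bel : Set Ω → ℝ) : Prop :=
  ∀ (N : ℕ) (A : Fin N → Set Ω),
    ∑ I ∈ (Finset.univ : Finset (Finset (Fin N))).filter (fun I => I ≠ ∅),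
      (-1 : ℝ) ^ (I.card + 1) * Bel (⋂ i ∈ I, A i) ≤ Bel (⋃ i, A i)

/-- Shafer belief function. -/
def IsBeliefFunction (Bel : Set Ω → ℝ) : Prop :=
  (∀ A : Set Ω, 0 ≤ Bel A ∧ Bel A ≤ 1) ∧ Bel ∅ = 0 ∧ Bel Set.univ = 1 ∧
  CompletelyMonotone Bel

lemma buy_spec {Ω : Type*} {R : (Ω → ℝ) → Bool} (hR : IsBettingFunction R) (X : Ω → ℝ) :
    ∀ α : ℝ, (R (fun ω => X ω - α) = true ↔ α ≤ Buy R X) := by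
  obtain ⟨α₀, h1, h2⟩ := hR X
  have hset : {α : ℝ | R (fun ω => X ω - α) = true} = Set.Iic (-α₀) := by
    ext α
    simp only [Set.mem_setOf_eq, Set.mem_Iic]
    constructor
    · intro h
      by_contra hlt
      push_neg at hlt
      have hf := h1 (-α) (by linarith)
      rw [show (fun ω => X ω + (-α)) = (fun ω => X ω - α) from by funext ω; ring] at hf
      rw [h] at hf
      exact Bool.true_eq_false.mp hf
    · intro h
      have ht := h2 (-α) (by linarith)
      rw [show (fun ω => X ω + (-α)) = (fun ω => X ω - α) from by funext ω; ring] at ht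
      exact ht
  have hb : Buy R X = -α₀ := by rw [Buy, hset, csSup_Iic]
  intro α
  rw [hb]
  constructor
  · intro h
    have : α ∈ Set.Iic (-α₀) := by rw [← hset]; exact h
    exact this
  · intro h
    have : α ∈ {α : ℝ | R (fun ω => X ω - α) = true} := by rw [hset]; exact h
    exact this

lemma buy_zero_iff {Ω : Type*} {R : (Ω → ℝ) → Bool} (hR : IsBettingFunction R) (X : Ω → ℝ) :
    R X = true ↔ 0 ≤ Buy R X := by
  have := buy_spec hR X 0
  rwa [show (fun ω => X ω - 0) = X from by funext ω; ring] at this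


theorem coherent_iff_buy [Fintype Ω] [Nonempty Ω] (R : (Ω → ℝ) → Bool)
    (hR : IsBettingFunction R) :
    Coherent R ↔
      ((∀ X : Ω → ℝ, sInf (Set.range X) ≤ Buy R X) ∧
       (∀ (X : Ω → ℝ) (c : ℝ), 0 < c → Buy R (fun ω => c * X ω) = c * Buy R X) ∧
       (∀ X Y : Ω → ℝ, Buy R X + Buy R Y ≤ Buy R (fun ω => X ω + Y ω))) := by
  constructor
  · rintro ⟨h1, h2, h3⟩
    refine ⟨?_, ?_, ?_⟩
    · intro X
      have hfin : (Set.range X).Finite := Set.finite_range X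
      have hne : (Set.range X).Nonempty := Set.range_nonempty X
      have key : ∀ ε : ℝ, 0 < ε → sInf (Set.range X) - ε ≤ Buy R X := by
        intro ε hε
        have := h1 (fun ω => X ω - (sInf (Set.range X) - ε)) ?_
        · exact (buy_spec hR X _).mp this
        · intro ω
          have : sInf (Set.range X) ≤ X ω :=
            csInf_le hfin.bddBelow (Set.mem_range_self ω)
          simp only [sub_pos]
          linarith
      have : ∀ ε : ℝ, 0 < ε → sInf (Set.range X) ≤ Buy R X + ε := by
        intro ε hε; have := key ε hε; linarith
      exact le_of_forall_pos_le_add this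
    · intro X c hc
      have hset : {α : ℝ | R (fun ω => c * X ω - α) = true} = Set.Iic (c * Buy R X) := by
        ext α
        simp only [Set.mem_setOf_eq, Set.mem_Iic]
        have heq : (fun ω => c * X ω - α) = (fun ω => c * (X ω - α / c)) := by
          funext ω; field_simp
        rw [heq, h2 _ c hc, buy_spec hR X (α / c), div_le_iff₀ hc]
        constructor
        · intro h; linarith [mul_comm (Buy R X) c ▸ h]
        · intro h; nlinarith
      rw [Buy, hset, csSup_Iic]
    · intro X Y
      have hX : R (fun ω => X ω - Buy R X) = true := (buy_spec hR X _).mpr le_rfl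
      have hY : R (fun ω => Y ω - Buy R Y) = true := (buy_spec hR Y _).mpr le_rfl
      have := h3 _ _ hX hY
      rw [show (fun ω => (X ω - Buy R X) + (Y ω - Buy R Y)) =
          (fun ω => (X ω + Y ω) - (Buy R X + Buy R Y)) from by funext ω; ring] at this
      exact (buy_spec hR (fun ω => X ω + Y ω) _).mp this
  · rintro ⟨h1, h2, h3⟩
    refine ⟨?_, ?_, ?_⟩
    · intro X hX
      rw [buy_zero_iff hR]
      have hfin : (Set.range X).Finite := Set.finite_range X
      have hne : (Set.range X).Nonempty := Set.range_nonempty X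
      have hmem : sInf (Set.range X) ∈ Set.range X := hne.csInf_mem hfin
      obtain ⟨ω, hω⟩ := hmem
      have : 0 < sInf (Set.range X) := hω ▸ hX ω
      linarith [h1 X]
    · intro X c hc
      have : (R (fun ω => c * X ω) = true) ↔ (R X = true) := by
        rw [buy_zero_iff hR, buy_zero_iff hR, h2 X c hc]
        constructor
        · intro h; nlinarith
        · intro h; positivity
      cases hx : R X
      · cases hy : R (fun ω => c * X ω)
        · rfl
        · exact absurd (this.mp hy) (by rw [hx]; simp)
      · exact this.mpr hx
    · intro X Y hX hY
      rw [buy_zero_iff hR] at hX hY ⊢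
      have := h3 X Y
      linarith
end

section
/- A betting function R is coherent if and only if its sell function satisfies: (i) Sell_R(X) ≤ max_{ω∈Ω} X(ω) for all X; (ii) Sell_R(λX) = λ·Sell_R(X) for all λ > 0; (iii) Sell_R(X+Y) ≤ Sell_R(X) + Sell_R(Y) for all X, Y. -/
open scoped Classical

variable {Ω : Type*}

lemma sell_spec (R : (Ω → ℝ) → Bool) (hR : IsBettingFunction R) (X : Ω → ℝ) (α : ℝ) :
    R (fun ω => α - X ω) = true ↔ Sell R X ≤ α := by
  obtain ⟨α₀, h1, h2⟩ := hR (fun ω => -X ω)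
  have hrw : ∀ β : ℝ, (fun ω => -X ω + β) = (fun ω => β - X ω) := by
    intro β; funext ω; ring
  have hset : {β : ℝ | R (fun ω => β - X ω) = true} = Set.Ici α₀ := by
    ext β
    simp only [Set.mem_setOf_eq, Set.mem_Ici]
    constructor
    · intro h
      by_contra hc
      push_neg at hc
      have := h1 β hc
      rw [hrw β, h] at this
      exact absurd this (by simp)
    · intro h
      have := h2 β h
      rwa [hrw β] at this
  have hsell : Sell R X = α₀ := by rw [Sell, hset, csInf_Ici]
  have := Set.ext_iff.mp hset α
  simpa [hsell] using this

lemma R_true_iff (R : (Ω → ℝ) → Bool) (hR : IsBettingFunction R) (X : Ω → ℝ) :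
    R X = true ↔ Sell R (fun ω => -X ω) ≤ 0 := by
  have := sell_spec R hR (fun ω => -X ω) 0
  rwa [show (fun ω => (0 : ℝ) - (-X ω)) = X from funext fun ω => by ring] at this

theorem coherent_iff_sell [Fintype Ω] [Nonempty Ω] (R : (Ω → ℝ) → Bool)
    (hR : IsBettingFunction R) :
    Coherent R ↔
      ((∀ X : Ω → ℝ, Sell R X ≤ sSup (Set.range X)) ∧
       (∀ (X : Ω → ℝ) (c : ℝ), 0 < c → Sell R (fun ω => c * X ω) = c * Sell R X) ∧
       (∀ X Y : Ω → ℝ, Sell R (fun ω => X ω + Y ω) ≤ Sell R X + Sell R Y)) := by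
  constructor
  · rintro ⟨hR1, hR2, hR3⟩
    refine ⟨?_, ?_, ?_⟩
    · -- (i)
      intro X
      have key : ∀ α : ℝ, sSup (Set.range X) < α → Sell R X ≤ α := by
        intro α hα
        rw [← sell_spec R hR X α]
        apply hR1
        intro ω
        have hXω : X ω ≤ sSup (Set.range X) :=
          le_csSup (Set.finite_range X).bddAbove ⟨ω, rfl⟩
        linarith
      by_contra hc
      push_neg at hc
      obtain ⟨β, hβ1, hβ2⟩ := exists_between hc
      exact absurd (key β hβ1) (not_le.mpr hβ2)
    · -- (ii)
      intro X c hc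
      apply le_antisymm
      · rw [← sell_spec R hR]
        have h1 : R (fun ω => Sell R X - X ω) = true := (sell_spec R hR X _).mpr le_rfl
        have := hR2 (fun ω => Sell R X - X ω) c hc
        rw [h1] at this
        rwa [show (fun ω => c * (Sell R X - X ω)) = (fun ω => c * Sell R X - c * X ω)
          from funext fun ω => by ring] at this
      · have h1 : R (fun ω => Sell R (fun ω => c * X ω) - c * X ω) = true :=
          (sell_spec R hR (fun ω => c * X ω) _).mpr le_rfl
        have h2 := hR2 (fun ω => Sell R (fun ω => c * X ω) / c - X ω) c hc
        rw [show (fun ω => c * (Sell R (fun ω => c * X ω) / c - X ω)) =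
          (fun ω => Sell R (fun ω => c * X ω) - c * X ω) from funext fun ω => by
            field_simp] at h2
        rw [h1] at h2
        have h3 := (sell_spec R hR X _).mp h2.symm
        rw [le_div_iff₀ hc] at h3
        linarith
    · -- (iii)
      intro X Y
      have hX : R (fun ω => Sell R X - X ω) = true := (sell_spec R hR X _).mpr le_rfl
      have hY : R (fun ω => Sell R Y - Y ω) = true := (sell_spec R hR Y _).mpr le_rfl
      have := hR3 _ _ hX hY
      rw [show (fun ω => (Sell R X - X ω) + (Sell R Y - Y ω)) =
        (fun ω => (Sell R X + Sell R Y) - (X ω + Y ω)) from funext fun ω => by ring] at this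
      exact (sell_spec R hR (fun ω => X ω + Y ω) _).mp this
  · rintro ⟨h1, h2, h3⟩
    refine ⟨?_, ?_, ?_⟩
    · -- R1
      intro X hX
      rw [R_true_iff R hR]
      refine le_trans (h1 _) ?_
      apply Real.sSup_nonpos
      rintro y ⟨ω, rfl⟩
      have := hX ω
      show -X ω ≤ 0
      linarith
    · -- R2
      intro X c hc
      have hiff : R (fun ω => c * X ω) = true ↔ R X = true := by
        rw [R_true_iff R hR, R_true_iff R hR]
        have := h2 (fun ω => -X ω) c hc
        rw [show (fun ω => c * (-X ω)) = (fun ω => -(c * X ω)) from funext fun ω => by ring]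
          at this
        rw [this]
        constructor
        · intro h; nlinarith
        · intro h; nlinarith
      cases hRX : R X with
      | false =>
          cases hRcX : R (fun ω => c * X ω) with
          | false => rfl
          | true => rw [hRX] at hiff; exact absurd (hiff.mp hRcX) (by simp)
      | true => exact hiff.mpr hRX
    · -- R3
      intro X Y hX hY
      rw [R_true_iff R hR] at hX hY ⊢
      have := h3 (fun ω => -X ω) (fun ω => -Y ω)
      rw [show (fun ω => -X ω + -Y ω) = (fun ω => -(X ω + Y ω)) from funext fun ω => by ring]
        at this
      linarith
end

section
/- If R is a coherent betting function, then for all bets X₁,…,X_N and Y₁,…,Y_M, there is no sure loss: max_{ω∈Ω} ( Σᵢ (Xᵢ(ω) - Buy_R(Xᵢ)) + Σⱼ (Sell_R(Yⱼ) - Yⱼ(ω)) ) ≥ 0. -/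
open scoped Classical

variable {Ω : Type*}

lemma buy_accepted (R : (Ω → ℝ) → Bool) (hR : IsBettingFunction R) (X : Ω → ℝ) :
    R (fun ω => X ω - Buy R X) = true := by
  obtain ⟨α₀, h1, h2⟩ := hR X
  have hset : {α : ℝ | R (fun ω => X ω - α) = true} = Set.Iic (-α₀) := by
    ext α
    simp only [Set.mem_setOf_eq, Set.mem_Iic]
    have heq : (fun ω => X ω - α) = fun ω => X ω + (-α) := by
      funext ω; ring
    rw [heq]
    constructor
    · intro h
      by_contra hc
      push_neg at hc
      have := h1 (-α) (by linarith)
      rw [h] at this; exact absurd this (by simp)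
    · intro h
      exact h2 (-α) (by linarith)
  have hbuy : Buy R X = -α₀ := by
    unfold Buy; rw [hset]; exact csSup_Iic
  rw [hbuy]
  have heq : (fun ω => X ω - (-α₀)) = fun ω => X ω + α₀ := by funext ω; ring
  rw [heq]
  exact h2 α₀ le_rfl

lemma sell_accepted (R : (Ω → ℝ) → Bool) (hR : IsBettingFunction R) (Y : Ω → ℝ) :
    R (fun ω => Sell R Y - Y ω) = true := by
  obtain ⟨β₀, h1, h2⟩ := hR (fun ω => -Y ω)
  have hset : {α : ℝ | R (fun ω => α - Y ω) = true} = Set.Ici β₀ := by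
    ext α
    simp only [Set.mem_setOf_eq, Set.mem_Ici]
    have heq : (fun ω => α - Y ω) = fun ω => -Y ω + α := by funext ω; ring
    rw [heq]
    constructor
    · intro h
      by_contra hc
      push_neg at hc
      have := h1 α hc
      rw [h] at this; exact absurd this (by simp)
    · intro h
      exact h2 α h
  have hsell : Sell R Y = β₀ := by
    unfold Sell; rw [hset]; exact csInf_Ici
  rw [hsell]
  have heq : (fun ω => β₀ - Y ω) = fun ω => -Y ω + β₀ := by funext ω; ring
  rw [heq]
  exact h2 β₀ le_rfl

lemma neg_const_rejected (R : (Ω → ℝ) → Bool) (hR : IsBettingFunction R)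
    (hC : Coherent R) (c : ℝ) (hc : c < 0) : R (fun _ => c) ≠ true := by
  intro h
  obtain ⟨α₀, h1, _⟩ := hR (fun _ => (0 : ℝ))
  set α := min α₀ 0 - 1 with hα
  have hαneg : α < 0 := by
    have h' := min_le_right α₀ (0:ℝ); rw [hα]; linarith
  have hαlt : α < α₀ := by
    have h' := min_le_left α₀ (0:ℝ); rw [hα]; linarith
  have hfalse := h1 α hαlt
  have heq : (fun _ : Ω => (0:ℝ) + α) = fun _ => α := by funext ω; ring
  rw [heq] at hfalse
  have hpos : 0 < α / c := div_pos_of_neg_of_neg hαneg hc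
  have := hC.2.1 (fun _ => c) (α / c) hpos
  have heq2 : (fun _ : Ω => α / c * c) = fun _ => α := by
    funext ω; exact div_mul_cancel₀ α (ne_of_lt hc)
  rw [heq2, h] at this
  rw [this] at hfalse
  exact absurd hfalse (by simp)

lemma accept_finsum (R : (Ω → ℝ) → Bool) (hC : Coherent R) :
    ∀ (n : ℕ) (f : Fin n → Ω → ℝ) (c : Ω → ℝ), R c = true →
      (∀ i, R (f i) = true) → R (fun ω => c ω + ∑ i, f i ω) = true := by
  intro n
  induction n with
  | zero => intro f c hc _; simpa using hc
  | succ n ih =>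
      intro f c hc hf
      have heq : (fun ω => c ω + ∑ i, f i ω)
          = fun ω => (c ω + f 0 ω) + ∑ i : Fin n, f i.succ ω := by
        funext ω; rw [Fin.sum_univ_succ]; ring
      rw [heq]
      exact ih (fun i => f i.succ) (fun ω => c ω + f 0 ω)
        (hC.2.2 c (f 0) hc (hf 0)) (fun i => hf i.succ)

theorem no_sure_loss [Fintype Ω] [Nonempty Ω] (R : (Ω → ℝ) → Bool)
    (hR : IsBettingFunction R) (hC : Coherent R) (N M : ℕ)
    (X : Fin N → Ω → ℝ) (Y : Fin M → Ω → ℝ) :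
    0 ≤ sSup (Set.range fun ω =>
      (∑ i, (X i ω - Buy R (X i))) + ∑ j, (Sell R (Y j) - Y j ω)) := by
  set G : Ω → ℝ := fun ω =>
    (∑ i, (X i ω - Buy R (X i))) + ∑ j, (Sell R (Y j) - Y j ω) with hG
  by_contra hcon
  push_neg at hcon
  set s := sSup (Set.range G) with hs
  have hbdd : BddAbove (Set.range G) := (Set.finite_range G).bddAbove
  have hle : ∀ ω, G ω ≤ s := fun ω => le_csSup hbdd ⟨ω, rfl⟩
  have hsneg : s < 0 := hcon
  -- H = G - s/2 is a sum of accepted bets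
  have hconst : R (fun _ : Ω => -s / 2) = true :=
    hC.1 _ (fun ω => by linarith)
  have hstep1 : R (fun ω => (fun _ : Ω => -s/2) ω
      + ∑ j, (Sell R (Y j) - Y j ω)) = true := by
    exact accept_finsum R hC M (fun j ω => Sell R (Y j) - Y j ω) _
      hconst (fun j => sell_accepted R hR (Y j))
  have hstep2 : R (fun ω => ((fun _ : Ω => -s/2) ω + ∑ j, (Sell R (Y j) - Y j ω))
      + ∑ i, (X i ω - Buy R (X i))) = true := by
    exact accept_finsum R hC N (fun i ω => X i ω - Buy R (X i)) _
      hstep1 (fun i => buy_accepted R hR (X i))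
  set H : Ω → ℝ := fun ω => ((fun _ : Ω => -s/2) ω + ∑ j, (Sell R (Y j) - Y j ω))
      + ∑ i, (X i ω - Buy R (X i)) with hH
  have hHval : ∀ ω, H ω = G ω - s/2 := by intro ω; simp only [hH, hG]; ring
  have hHle : ∀ ω, H ω ≤ s/2 := by
    intro ω; rw [hHval]; have h' := hle ω
    clear_value H s G; linarith
  -- K = -H + s/4 is pointwise positive, hence accepted
  have hKeq : R (fun ω => -H ω + s/4) = true :=
    hC.1 _ (fun ω => by have := hHle ω; linarith)
  have hsum : R (fun ω => H ω + (-H ω + s/4)) = true :=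
    hC.2.2 H _ hstep2 hKeq
  have heqc : (fun ω => H ω + (-H ω + s/4)) = fun _ : Ω => s/4 := by
    funext ω; ring
  rw [heqc] at hsum
  exact neg_const_rejected R hR hC _ (by linarith) hsum
end

section
/- A function P: 2^Ω → [0,1] is a probability distribution (P(∅)=0, P(Ω)=1, finitely additive) if and only if there exists a coherent betting function R such that P(A) = Buy_R(1_A) = Sell_R(1_A) for every A ⊆ Ω. -/
open scoped Classical

variable {Ω : Type*}

-- buy characterization
lemma buy_iff {R : (Ω → ℝ) → Bool} (hb : IsBettingFunction R) (X : Ω → ℝ) (α : ℝ) :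
    R (fun ω => X ω - α) = true ↔ α ≤ Buy R X := by
  obtain ⟨α₀, h1, h2⟩ := hb X
  have key : ∀ β : ℝ, R (fun ω => X ω - β) = true ↔ β ≤ -α₀ := by
    intro β
    have he : (fun ω => X ω - β) = (fun ω => X ω + (-β)) := by funext ω; ring
    rw [he]
    constructor
    · intro h
      by_contra hlt
      push_neg at hlt
      have := h1 (-β) (by linarith)
      rw [h] at this; exact absurd this (by simp)
    · intro h; exact h2 (-β) (by linarith)
  have hset : {β : ℝ | R (fun ω => X ω - β) = true} = Set.Iic (-α₀) :=
    Set.ext fun β => key β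
  rw [Buy, hset, csSup_Iic, ← key]

lemma sell_iff {R : (Ω → ℝ) → Bool} (hb : IsBettingFunction R) (X : Ω → ℝ) (α : ℝ) :
    R (fun ω => α - X ω) = true ↔ Sell R X ≤ α := by
  obtain ⟨α₀, h1, h2⟩ := hb (fun ω => -X ω)
  have key : ∀ β : ℝ, R (fun ω => β - X ω) = true ↔ α₀ ≤ β := by
    intro β
    have he : (fun ω => β - X ω) = (fun ω => -X ω + β) := by funext ω; ring
    rw [he]
    constructor
    · intro h
      by_contra hlt
      push_neg at hlt
      have := h1 β hlt
      rw [h] at this; exact absurd this (by simp)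
    · intro h; exact h2 β h
  have hset : {β : ℝ | R (fun ω => β - X ω) = true} = Set.Ici α₀ :=
    Set.ext fun β => key β
  rw [Sell, hset, csInf_Ici, ← key]

-- monotonicity of R
lemma R_mono {R : (Ω → ℝ) → Bool} (hb : IsBettingFunction R) (hc : Coherent R)
    {X Y : Ω → ℝ} (hXY : ∀ ω, X ω ≤ Y ω) (hX : R X = true) : R Y = true := by
  obtain ⟨h1, h2, h3⟩ := hc
  have hall : ∀ α : ℝ, 0 < α → R (fun ω => Y ω + α) = true := by
    intro α hα
    have hpos : R (fun ω => (Y ω - X ω + α)) = true :=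
      h1 _ fun ω => by have := hXY ω; linarith
    have := h3 X _ hX hpos
    have he : (fun ω => X ω + (Y ω - X ω + α)) = (fun ω => Y ω + α) := by
      funext ω; ring
    rwa [he] at this
  obtain ⟨α₀, hf, ht⟩ := hb Y
  have hα₀ : α₀ ≤ 0 := by
    by_contra h
    push_neg at h
    have := hf (α₀ / 2) (by linarith)
    rw [hall (α₀ / 2) (by linarith)] at this
    exact absurd this (by simp)
  have := ht 0 hα₀
  have he : (fun ω => Y ω + 0) = Y := by funext ω; ring
  rwa [he] at this

lemma R_const {R : (Ω → ℝ) → Bool} (hb : IsBettingFunction R) (hc : Coherent R)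
    (c : ℝ) : R (fun _ => c) = true ↔ 0 ≤ c := by
  obtain ⟨h1, h2, h3⟩ := hc
  constructor
  · intro h
    by_contra hneg
    push_neg at hneg
    -- then all negative constants are accepted
    have hallneg : ∀ d : ℝ, d < 0 → R (fun _ => d) = true := by
      intro d hd
      have hpos : (0:ℝ) < d / c := div_pos_iff.mpr (Or.inr ⟨hd, hneg⟩)
      have := h2 (fun _ => c) (d / c) hpos
      have he : (fun _ : Ω => d / c * c) = (fun _ : Ω => d) := by
        funext ω; field_simp [ne_of_lt hneg]
      rw [he, h] at this
      exact this
    obtain ⟨α₀, hf, ht⟩ := hb (fun _ => (0:ℝ))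
    have key : ∀ α : ℝ, α < α₀ → R (fun _ => α) = false := by
      intro α hα
      have := hf α hα
      have he : (fun ω : Ω => (0:ℝ) + α) = fun _ => α := by funext ω; ring
      rwa [he] at this
    have hlt : min α₀ 0 - 1 < α₀ := by
      have := min_le_left α₀ (0:ℝ); linarith
    have hneg' : min α₀ 0 - 1 < 0 := by
      have := min_le_right α₀ (0:ℝ); linarith
    have h1' := key _ hlt
    rw [hallneg _ hneg'] at h1'
    exact absurd h1' (by simp)
  · intro h
    rcases eq_or_lt_of_le h with h0 | h0
    · -- c = 0
      obtain ⟨α₀, hf, ht⟩ := hb (fun _ => (0:ℝ))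
      have hα₀ : α₀ ≤ 0 := by
        by_contra hgt
        push_neg at hgt
        have hfa := hf (α₀ / 2) (by linarith)
        have hta : R (fun ω : Ω => (0:ℝ) + α₀ / 2) = true := by
          have he : (fun ω : Ω => (0:ℝ) + α₀ / 2) = fun _ => α₀ / 2 := by
            funext ω; ring
          rw [he]; exact h1 _ fun ω => by linarith
        rw [hta] at hfa; exact absurd hfa (by simp)
      have := ht 0 hα₀
      have he : (fun ω : Ω => (0:ℝ) + 0) = fun _ => c := by
        funext ω; rw [← h0]; ring
      rwa [he] at this
    · exact h1 _ fun ω => h0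

section BuyLemmas
variable {R : (Ω → ℝ) → Bool} (hb : IsBettingFunction R) (hc : Coherent R)
include hb hc

lemma buy_mono {X Y : Ω → ℝ} (hXY : ∀ ω, X ω ≤ Y ω) : Buy R X ≤ Buy R Y := by
  have hX : R (fun ω => X ω - Buy R X) = true := (buy_iff hb X _).mpr le_rfl
  have hY : R (fun ω => Y ω - Buy R X) = true :=
    R_mono hb hc (fun ω => sub_le_sub_right (hXY ω) _) hX
  exact (buy_iff hb Y _).mp hY

lemma buy_const (c : ℝ) : Buy R (fun _ => c) = c := by
  have key : ∀ α : ℝ, α ≤ Buy R (fun _ => c) ↔ α ≤ c := by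
    intro α
    rw [← buy_iff hb (fun _ => c) α, R_const hb hc]
    constructor <;> intro h <;> linarith
  have h1 : Buy R (fun _ => c) ≤ c := (key _).mp le_rfl
  have h2 : c ≤ Buy R (fun _ => c) := (key c).mpr le_rfl
  linarith

lemma buy_superadd (X Y : Ω → ℝ) : Buy R X + Buy R Y ≤ Buy R (fun ω => X ω + Y ω) := by
  have hX : R (fun ω => X ω - Buy R X) = true := (buy_iff hb X _).mpr le_rfl
  have hY : R (fun ω => Y ω - Buy R Y) = true := (buy_iff hb Y _).mpr le_rfl
  have := hc.2.2 _ _ hX hY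
  have he : (fun ω => (X ω - Buy R X) + (Y ω - Buy R Y)) =
      (fun ω => (X ω + Y ω) - (Buy R X + Buy R Y)) := by funext ω; ring
  rw [he] at this
  exact (buy_iff hb _ _).mp this

lemma buy_add_le_sell (X Y : Ω → ℝ) :
    Buy R (fun ω => X ω + Y ω) ≤ Buy R X + Sell R Y := by
  have hXY : R (fun ω => (X ω + Y ω) - Buy R (fun ω => X ω + Y ω)) = true :=
    (buy_iff hb _ _).mpr le_rfl
  have hY : R (fun ω => Sell R Y - Y ω) = true := (sell_iff hb Y _).mpr le_rfl
  have := hc.2.2 _ _ hXY hY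
  have he : (fun ω => ((X ω + Y ω) - Buy R (fun ω => X ω + Y ω)) + (Sell R Y - Y ω)) =
      (fun ω => X ω - (Buy R (fun ω => X ω + Y ω) - Sell R Y)) := by funext ω; ring
  rw [he] at this
  have := (buy_iff hb X _).mp this
  linarith

end BuyLemmas

lemma prob_finset_sum {P : Set Ω → ℝ} (hP : IsProbDist P) (s : Finset Ω) :
    P ↑s = ∑ ω ∈ s, P {ω} := by
  classical
  induction s using Finset.induction_on with
  | empty => simpa using hP.2.1
  | @insert a s ha ih =>
      have hins : ((insert a s : Finset Ω) : Set Ω) = {a} ∪ ↑s := by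
        rw [Finset.coe_insert, Set.insert_eq]
      have hdisj : ({a} : Set Ω) ∩ ↑s = ∅ := by
        simp only [Set.singleton_inter_eq_empty, Finset.mem_coe]; exact ha
      rw [hins, hP.2.2.2, hdisj, hP.2.1, ih, Finset.sum_insert ha]
      ring

lemma prob_eq_sum_singletons [Fintype Ω] {P : Set Ω → ℝ} (hP : IsProbDist P)
    (A : Set Ω) : P A = ∑ ω ∈ A.toFinset, P {ω} := by
  classical
  rw [← prob_finset_sum hP, Set.coe_toFinset]

section ForwardDir
variable [Fintype Ω] {P : Set Ω → ℝ}

noncomputable def Rof (P : Set Ω → ℝ) : (Ω → ℝ) → Bool :=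
  fun X => decide (0 ≤ ∑ ω : Ω, P {ω} * X ω)

lemma sum_singletons_one (hP : IsProbDist P) : ∑ ω : Ω, P {ω} = 1 := by
  classical
  have := prob_eq_sum_singletons hP (Set.univ : Set Ω)
  rw [hP.2.2.1] at this
  simpa using this.symm

lemma Rof_shift (hP : IsProbDist P) (X : Ω → ℝ) (α : ℝ) :
    ∑ ω : Ω, P {ω} * (X ω + α) = (∑ ω : Ω, P {ω} * X ω) + α := by
  rw [Finset.sum_congr rfl (fun ω _ => mul_add (P {ω}) (X ω) α), Finset.sum_add_distrib,
    ← Finset.sum_mul, sum_singletons_one hP, one_mul]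

lemma Rof_betting (hP : IsProbDist P) : IsBettingFunction (Rof P) := by
  intro X
  refine ⟨-∑ ω : Ω, P {ω} * X ω, fun α hα => ?_, fun α hα => ?_⟩
  · simp only [Rof, decide_eq_false_iff_not, not_le, Rof_shift hP]
    linarith
  · simp only [Rof, decide_eq_true_eq, Rof_shift hP]
    linarith

lemma Rof_coherent (hP : IsProbDist P) : Coherent (Rof P) := by
  refine ⟨fun X hX => ?_, fun X c hc => ?_, fun X Y hX hY => ?_⟩
  · simp only [Rof, decide_eq_true_eq]
    exact Finset.sum_nonneg fun ω _ => mul_nonneg (hP.1 _).1 (le_of_lt (hX ω))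
  · simp only [Rof]
    congr 1
    have he : ∀ ω, P {ω} * (c * X ω) = c * (P {ω} * X ω) := fun ω => by ring
    rw [Finset.sum_congr rfl (fun ω _ => he ω), ← Finset.mul_sum]
    rw [eq_iff_iff]
    constructor <;> intro h
    · exact nonneg_of_mul_nonneg_right h hc
    · exact mul_nonneg hc.le h
  · simp only [Rof, decide_eq_true_eq] at *
    have he : ∀ ω : Ω, P {ω} * (X ω + Y ω) = P {ω} * X ω + P {ω} * Y ω :=
      fun ω => by ring
    rw [Finset.sum_congr rfl (fun ω _ => he ω), Finset.sum_add_distrib]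
    linarith

lemma Rof_expect_ind (hP : IsProbDist P) (A : Set Ω) :
    ∑ ω : Ω, P {ω} * ind A ω = P A := by
  classical
  rw [prob_eq_sum_singletons hP A]
  rw [← Finset.sum_filter_add_sum_filter_not Finset.univ (fun ω => ω ∈ A)]
  have h1 : ∑ ω ∈ Finset.univ.filter (fun ω => ω ∈ A), P {ω} * ind A ω
      = ∑ ω ∈ Finset.univ.filter (fun ω => ω ∈ A), P {ω} := by
    refine Finset.sum_congr rfl fun ω hω => ?_
    simp only [Finset.mem_filter] at hω
    simp [ind, Set.indicator_of_mem hω.2]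
  have h2 : ∑ ω ∈ Finset.univ.filter (fun ω => ¬ ω ∈ A), P {ω} * ind A ω = 0 := by
    refine Finset.sum_eq_zero fun ω hω => ?_
    simp only [Finset.mem_filter] at hω
    simp [ind, Set.indicator_of_notMem hω.2]
  rw [h1, h2, add_zero]
  congr 1
  ext ω
  simp [Set.mem_toFinset]

lemma Rof_buy (hP : IsProbDist P) (A : Set Ω) : Buy (Rof P) (ind A) = P A := by
  have key : ∀ α : ℝ, α ≤ Buy (Rof P) (ind A) ↔ α ≤ P A := by
    intro α
    rw [← buy_iff (Rof_betting hP) (ind A) α]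
    simp only [Rof, decide_eq_true_eq]
    have he : ∀ ω : Ω, P {ω} * (ind A ω - α) = P {ω} * (ind A ω + (-α)) :=
      fun ω => by ring
    rw [Finset.sum_congr rfl (fun ω _ => he ω), Rof_shift hP, Rof_expect_ind hP]
    constructor <;> intro h <;> linarith
  have h1 := (key _).mp le_rfl
  have h2 := (key _).mpr le_rfl
  linarith

lemma Rof_sell (hP : IsProbDist P) (A : Set Ω) : Sell (Rof P) (ind A) = P A := by
  have key : ∀ α : ℝ, Sell (Rof P) (ind A) ≤ α ↔ P A ≤ α := by
    intro α
    rw [← sell_iff (Rof_betting hP) (ind A) α]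
    simp only [Rof, decide_eq_true_eq]
    have he : ∀ ω : Ω, P {ω} * (α - ind A ω) = P {ω} * (-ind A ω + α) :=
      fun ω => by ring
    rw [Finset.sum_congr rfl (fun ω _ => he ω), Rof_shift hP]
    have hneg : ∑ ω : Ω, P {ω} * -ind A ω = -(P A) := by
      rw [← Rof_expect_ind hP A, ← Finset.sum_neg_distrib]
      exact Finset.sum_congr rfl fun ω _ => by ring
    rw [hneg]
    constructor <;> intro h <;> linarith
  have h1 := (key _).mp le_rfl
  have h2 := (key _).mpr le_rfl
  linarith

end ForwardDir

lemma ind_nonneg (A : Set Ω) (ω : Ω) : 0 ≤ ind A ω := by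
  classical
  simp only [ind, Set.indicator]
  split <;> norm_num

lemma ind_le_one (A : Set Ω) (ω : Ω) : ind A ω ≤ 1 := by
  classical
  simp only [ind, Set.indicator]
  split <;> norm_num

lemma ind_add_ind (A C : Set Ω) :
    (fun ω => ind A ω + ind C ω) = (fun ω => ind (A ∪ C) ω + ind (A ∩ C) ω) := by
  classical
  funext ω
  by_cases hA : ω ∈ A <;> by_cases hC : ω ∈ C <;>
    simp [ind, Set.indicator, hA, hC]

theorem probDist_iff_buy_eq_sell [Fintype Ω] [Nonempty Ω] (P : Set Ω → ℝ) :
    IsProbDist P ↔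
      ∃ R : (Ω → ℝ) → Bool, IsBettingFunction R ∧ Coherent R ∧
        ∀ A : Set Ω, P A = Buy R (ind A) ∧ P A = Sell R (ind A) := by
  constructor
  · intro hP
    exact ⟨Rof P, Rof_betting hP, Rof_coherent hP,
      fun A => ⟨(Rof_buy hP A).symm, (Rof_sell hP A).symm⟩⟩
  · rintro ⟨R, hb, hc, hPA⟩
    have hbuy : ∀ A : Set Ω, P A = Buy R (ind A) := fun A => (hPA A).1
    have hsell : ∀ A : Set Ω, P A = Sell R (ind A) := fun A => (hPA A).2
    have hind0 : ind (∅ : Set Ω) = fun _ => (0:ℝ) := by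
      funext ω; simp [ind]
    have hind1 : ind (Set.univ : Set Ω) = fun _ => (1:ℝ) := by
      funext ω; simp [ind]
    have hP0 : P ∅ = 0 := by
      rw [hbuy ∅, hind0, buy_const hb hc]
    have hP1 : P Set.univ = 1 := by
      rw [hbuy Set.univ, hind1, buy_const hb hc]
    have hnn : ∀ A : Set Ω, 0 ≤ P A := by
      intro A
      rw [hbuy A]
      have := buy_mono hb hc (X := fun _ => (0:ℝ)) (Y := ind A)
        (fun ω => ind_nonneg A ω)
      rwa [buy_const hb hc] at this
    have hle1 : ∀ A : Set Ω, P A ≤ 1 := by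
      intro A
      rw [hbuy A]
      have := buy_mono hb hc (X := ind A) (Y := fun _ => (1:ℝ))
        (fun ω => ind_le_one A ω)
      rwa [buy_const hb hc] at this
    refine ⟨fun A => ⟨hnn A, hle1 A⟩, hP0, hP1, fun A C => ?_⟩
    have hkey : Buy R (fun ω => ind A ω + ind C ω) =
        Buy R (fun ω => ind (A ∪ C) ω + ind (A ∩ C) ω) := by
      rw [ind_add_ind]
    have h1 : P (A ∪ C) + P (A ∩ C) ≤ P A + P C := by
      have ha := buy_superadd hb hc (ind (A ∪ C)) (ind (A ∩ C))
      have hb' := buy_add_le_sell hb hc (ind A) (ind C)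
      rw [← hkey] at ha
      have hsC : Sell R (ind C) = Buy R (ind C) := (hsell C).symm.trans (hbuy C)
      rw [hbuy (A ∪ C), hbuy (A ∩ C), hbuy A, hbuy C]
      linarith [ha, hb', hsC]
    have h2 : P A + P C ≤ P (A ∪ C) + P (A ∩ C) := by
      have ha := buy_superadd hb hc (ind A) (ind C)
      have hb' := buy_add_le_sell hb hc (ind (A ∪ C)) (ind (A ∩ C))
      rw [hkey] at ha
      have hsI : Sell R (ind (A ∩ C)) = Buy R (ind (A ∩ C)) :=
        (hsell (A ∩ C)).symm.trans (hbuy (A ∩ C))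
      rw [hbuy (A ∪ C), hbuy (A ∩ C), hbuy A, hbuy C]
      linarith [ha, hb', hsI]
    linarith
end

section
/- A function P: 2^Ω → [0,1] is a probability distribution if and only if there exists a coherent and P-consistent betting function R such that P(A) = Buy_R(1_A) for every A ⊆ Ω. -/
open scoped Classical

variable {Ω : Type*}

lemma my_buy_iff {R : (Ω → ℝ) → Bool} (hR : IsBettingFunction R) (X : Ω → ℝ) (α : ℝ) :
    R (fun ω => X ω - α) = true ↔ α ≤ Buy R X := by
  obtain ⟨α₀, h1, h2⟩ := hR X
  have key : ∀ β : ℝ, R (fun ω => X ω - β) = true ↔ β ≤ -α₀ := by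
    intro β
    have he : (fun ω => X ω + (-β)) = fun ω => X ω - β := by funext ω; ring
    constructor
    · intro h
      by_contra hlt
      push_neg at hlt
      have := h1 (-β) (by linarith)
      rw [he] at this
      simp [h] at this
    · intro h
      have := h2 (-β) (by linarith)
      rwa [he] at this
  have hset : {β : ℝ | R (fun ω => X ω - β) = true} = Set.Iic (-α₀) := by
    ext β; simpa [Set.mem_Iic] using key β
  have hb : Buy R X = -α₀ := by rw [Buy, hset]; exact csSup_Iic
  rw [hb]; exact key α

lemma my_buy_add_const {R : (Ω → ℝ) → Bool} (hR : IsBettingFunction R) (X : Ω → ℝ) (c : ℝ) :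
    Buy R (fun ω => X ω + c) = Buy R X + c := by
  have hset : {α : ℝ | R (fun ω => (X ω + c) - α) = true} = Set.Iic (Buy R X + c) := by
    ext α
    have he : (fun ω => (X ω + c) - α) = fun ω => X ω - (α - c) := by funext ω; ring
    simp only [Set.mem_setOf_eq, Set.mem_Iic]
    rw [he, my_buy_iff hR]
    constructor <;> intro h <;> linarith
  rw [Buy, hset]; exact csSup_Iic

lemma my_buy_zero {R : (Ω → ℝ) → Bool} (hR : IsBettingFunction R) (hC : Coherent R) :
    Buy R (fun _ => (0:ℝ)) = 0 := by
  set b := Buy R (fun _ : Ω => (0:ℝ)) with hbdef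
  have h1 : R (fun ω : Ω => (0:ℝ) - b) = true := (my_buy_iff hR _ b).mpr le_rfl
  have h2 := hC.2.2 _ _ h1 h1
  have he : (fun ω : Ω => ((0:ℝ) - b) + ((0:ℝ) - b)) = fun ω : Ω => (0:ℝ) - (2*b) := by
    funext ω; ring
  rw [he] at h2
  have hle : 2 * b ≤ b := (my_buy_iff hR _ _).mp h2
  have hge : 0 ≤ b := by
    by_contra hb
    push_neg at hb
    have : R (fun ω : Ω => (0:ℝ) - b/2) = true := hC.1 _ (fun ω => by linarith)
    have := (my_buy_iff hR _ _).mp this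
    linarith
  linarith

lemma my_sInf_mono [Fintype Ω] {X Y : Ω → ℝ} (h : ∀ ω, X ω ≤ Y ω) {E : Set Ω}
    (hE : E.Nonempty) : sInf (X '' E) ≤ sInf (Y '' E) := by
  apply le_csInf (hE.image Y)
  rintro b ⟨ω, hω, rfl⟩
  exact le_trans (csInf_le (Set.Finite.bddBelow (Set.toFinite _)) ⟨ω, hω, rfl⟩) (h ω)

lemma my_probDist_sum [Fintype Ω] {P : Set Ω → ℝ} (hP : IsProbDist P) (s : Finset Ω) :
    P ↑s = ∑ ω ∈ s, P {ω} := by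
  induction s using Finset.induction_on with
  | empty => simpa using hP.2.1
  | @insert a s ha ih =>
    rw [Finset.coe_insert, Set.insert_eq, hP.2.2.2, ih, Finset.sum_insert ha]
    have : ({a} : Set Ω) ∩ ↑s = ∅ := by
      ext x; simp only [Set.mem_inter_iff, Set.mem_singleton_iff, Finset.mem_coe,
        Set.mem_empty_iff_false, iff_false, not_and]
      rintro rfl; exact ha
    rw [this, hP.2.1]; ring

theorem probDist_iff_PConsistent [Fintype Ω] [Nonempty Ω] (P : Set Ω → ℝ) :
    IsProbDist P ↔
      ∃ R : (Ω → ℝ) → Bool, IsBettingFunction R ∧ Coherent R ∧ PConsistent R ∧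
        ∀ A : Set Ω, P A = Buy R (ind A) := by
  constructor
  · intro hP
    have hp0 : ∀ ω : Ω, 0 ≤ P {ω} := fun ω => (hP.1 _).1
    have hsum : ∑ ω : Ω, P {ω} = 1 := by
      have := my_probDist_sum hP (Finset.univ : Finset Ω)
      rw [Finset.coe_univ, hP.2.2.1] at this
      exact this.symm
    set E : (Ω → ℝ) → ℝ := fun X => ∑ ω : Ω, P {ω} * X ω with hEdef
    have hshift : ∀ (X : Ω → ℝ) (α : ℝ), E (fun ω => X ω + α) = E X + α := by
      intro X α
      simp only [hEdef, mul_add, Finset.sum_add_distrib, ← Finset.sum_mul, hsum, one_mul]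
    refine ⟨fun X => decide (0 ≤ E X), ?_, ?_, ?_, ?_⟩
    · intro X
      refine ⟨-(E X), ?_, ?_⟩
      · intro α hα
        simp only [decide_eq_false_iff_not, not_le, hshift]
        linarith
      · intro α hα
        simp only [decide_eq_true_eq, hshift]
        linarith
    · refine ⟨?_, ?_, ?_⟩
      · intro X hX
        simp only [decide_eq_true_eq]
        exact Finset.sum_nonneg fun ω _ => mul_nonneg (hp0 ω) (hX ω).le
      · intro X c hc
        have : E (fun ω => c * X ω) = c * E X := by
          simp only [hEdef, Finset.mul_sum]; congr 1; funext ω; ring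
        simp only [this, decide_eq_decide]
        constructor
        · intro h; nlinarith
        · intro h; positivity
      · intro X Y hX hY
        simp only [decide_eq_true_eq] at hX hY ⊢
        have : E (fun ω => X ω + Y ω) = E X + E Y := by
          simp only [hEdef, mul_add, Finset.sum_add_distrib]
        rw [this]; linarith
    all_goals
      have hbuy : ∀ X : Ω → ℝ, Buy (fun X => decide (0 ≤ E X)) X = E X := by
        intro X
        have hset : {α : ℝ | decide (0 ≤ E (fun ω => X ω - α)) = true} = Set.Iic (E X) := by
          ext α
          have : E (fun ω => X ω - α) = E X - α := by
            have := hshift X (-α)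
            simpa [sub_eq_add_neg] using this
          simp only [Set.mem_setOf_eq, decide_eq_true_eq, this, Set.mem_Iic]
          constructor <;> intro h <;> linarith
        rw [Buy, hset]; exact csSup_Iic
    · intro N M X Y h
      have hpt : ∀ ω : Ω, ∑ i, X i ω ≤ ∑ j, Y j ω := by
        intro ω
        have := h {ω} ⟨ω, rfl⟩
        simpa [Set.image_singleton] using this
      simp only [hbuy]
      have hL : ∑ i, E (X i) = E (fun ω => ∑ i, X i ω) := by
        simp only [hEdef, Finset.mul_sum]
        rw [Finset.sum_comm]
      have hR : ∑ j, E (Y j) = E (fun ω => ∑ j, Y j ω) := by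
        simp only [hEdef, Finset.mul_sum]
        rw [Finset.sum_comm]
      rw [hL, hR]
      exact Finset.sum_le_sum fun ω _ => mul_le_mul_of_nonneg_left (hpt ω) (hp0 ω)
    · intro A
      rw [hbuy]
      have h1 : ∀ ω : Ω, P {ω} * ind A ω = if ω ∈ A.toFinset then P {ω} else 0 := by
        intro ω
        by_cases h : ω ∈ A <;> simp [ind, Set.indicator, h]
      symm
      calc E (ind A) = ∑ ω ∈ A.toFinset, P {ω} := by
            rw [hEdef]
            simp only [h1]
            rw [Finset.sum_ite_mem, Finset.univ_inter]
        _ = P A := by rw [← my_probDist_sum hP, Set.coe_toFinset]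
  · rintro ⟨R, hR, hC, hPC, hA⟩
    have hzero : Buy R (ind (∅ : Set Ω)) = 0 := by
      have : ind (∅ : Set Ω) = fun _ => (0:ℝ) := by funext ω; simp [ind]
      rw [this, my_buy_zero hR hC]
    have hone : Buy R (ind (Set.univ : Set Ω)) = 1 := by
      have : ind (Set.univ : Set Ω) = fun ω => (fun _ : Ω => (0:ℝ)) ω + 1 := by
        funext ω; simp [ind]
      rw [this, my_buy_add_const hR, my_buy_zero hR hC]; ring
    have hmono : ∀ X Y : Ω → ℝ, (∀ ω, X ω ≤ Y ω) → Buy R X ≤ Buy R Y := by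
      intro X Y h
      have := hPC 1 1 (fun _ => X) (fun _ => Y) ?_
      · simpa using this
      · intro E hE
        simpa using my_sInf_mono h hE
    refine ⟨?_, ?_, ?_, ?_⟩
    · intro A
      constructor
      · rw [hA A, ← hzero]
        apply hmono
        intro ω
        simp [ind]
        exact Set.indicator_nonneg (fun _ _ => zero_le_one) ω
      · rw [hA A, ← hone]
        apply hmono
        intro ω
        by_cases h : ω ∈ A <;> simp [ind, Set.indicator, h]
    · rw [hA, hzero]
    · rw [hA, hone]
    · intro A C
      have heq : (fun ω => ∑ i, ![ind (A ∪ C), ind (A ∩ C)] i ω)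
          = (fun ω => ∑ j, ![ind A, ind C] j ω) := by
        funext ω
        simp only [Fin.sum_univ_two, Matrix.cons_val_zero, Matrix.cons_val_one, Matrix.head_cons]
        by_cases h1 : ω ∈ A <;> by_cases h2 : ω ∈ C <;>
          simp [ind, Set.indicator, h1, h2]
      have h1 := hPC 2 2 ![ind (A ∪ C), ind (A ∩ C)] ![ind A, ind C]
        (fun E hE => le_of_eq (by rw [heq]))
      have h2 := hPC 2 2 ![ind A, ind C] ![ind (A ∪ C), ind (A ∩ C)]
        (fun E hE => le_of_eq (by rw [heq]))
      simp only [Fin.sum_univ_two, Matrix.cons_val_zero, Matrix.cons_val_one,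
        Matrix.head_cons] at h1 h2
      rw [hA A, hA C, hA (A ∪ C), hA (A ∩ C)]
      linarith
end

section
/- Let Ω = {1,2,3,4} and define Buy(X) = min{ (X(1)+X(2))/2, (X(1)+X(2)+X(3)+X(4))/4 }. Then for every nonempty S ⊆ Ω, min_{ω∈S} 1_{\{2,3,4\}}(ω) + min_{ω∈S} 1_{\{2\}}(ω) ≥ min_{ω∈S} 1_{\{2,3\}}(ω) + min_{ω∈S} 1_{\{2,4\}}(ω), yet Buy(1_{\{2,3,4\}}) + Buy(1_{\{2\}}) = 3/4 < 1 = Buy(1_{\{2,3\}}) + Buy(1_{\{2,4\}}). Hence the corresponding betting function is coherent but not B-consistent. -/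
open scoped Classical

variable {Ω : Type*}

/-- The example buy functional on `Ω = {1,2,3,4}` (encoded as `Fin 4`,
with `1,2,3,4` corresponding to `0,1,2,3`). -/
noncomputable def BuyEx (X : Fin 4 → ℝ) : ℝ :=
  min ((X 0 + X 1) / 2) ((X 0 + X 1 + X 2 + X 3) / 4)

/- The events `{2,3}` and `{2,4}` have union `{2,3,4}` and intersection `{2}`. The guaranteed
revenue `min_S 1_A` of an indicator bet is `1` if `S ⊆ A` and `0` otherwise, so on every `S`
the union and intersection together guarantee at least as much as the two events. `Buy`, a
minimum of two expectations, is superadditive and positively homogeneous (hence coherent) but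
not modular: it prices the union and intersection at `1/2 + 1/4`, the two events at
`1/2 + 1/2`. -/

theorem sInf_image_ind (A : Set Ω) {S : Set Ω} (hS : S.Nonempty) :
    sInf (ind A '' S) = if S ⊆ A then 1 else 0 := by
  split_ifs with h
  · have himg : ind A '' S = {1} :=
      Set.eq_singleton_iff_nonempty_unique_mem.mpr
        ⟨hS.image _, by rintro _ ⟨x, hx, rfl⟩; simp [ind, Set.indicator_of_mem (h hx)]⟩
    rw [himg, csInf_singleton]
  · obtain ⟨x, hxS, hxA⟩ := Set.not_subset.mp h
    have hnonneg : ∀ y ∈ ind A '' S, (0 : ℝ) ≤ y := by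
      rintro _ ⟨z, -, rfl⟩
      exact Set.indicator_nonneg (fun _ _ => zero_le_one) _
    refine le_antisymm (csInf_le ⟨0, hnonneg⟩ ⟨x, hxS, ?_⟩) (le_csInf (hS.image _) hnonneg)
    simp [ind, Set.indicator_of_notMem hxA]

theorem sInf_image_ind_add_le_union_inter (A B : Set Ω) {S : Set Ω} (hS : S.Nonempty) :
    sInf (ind A '' S) + sInf (ind B '' S) ≤
      sInf (ind (A ∪ B) '' S) + sInf (ind (A ∩ B) '' S) := by
  simp only [sInf_image_ind _ hS, Set.subset_inter_iff]
  have hA : S ⊆ A → S ⊆ A ∪ B := fun h => h.trans Set.subset_union_left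
  have hB : S ⊆ B → S ⊆ A ∪ B := fun h => h.trans Set.subset_union_right
  split_ifs <;> simp_all

theorem buy_decide_nonneg {F : (Ω → ℝ) → ℝ}
    (hF : ∀ (X : Ω → ℝ) (a : ℝ), F (fun ω => X ω - a) = F X - a) (X : Ω → ℝ) :
    Buy (fun Y => decide (0 ≤ F Y)) X = F X := by
  have hset : {a : ℝ | decide (0 ≤ F (fun ω => X ω - a)) = true} = Set.Iic (F X) := by
    ext a
    simp [hF]
  rw [Buy, hset, csSup_Iic]

theorem coherent_decide_nonneg {F : (Ω → ℝ) → ℝ}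
    (hpos : ∀ X : Ω → ℝ, (∀ ω, 0 < X ω) → 0 ≤ F X)
    (hsmul : ∀ (X : Ω → ℝ) (c : ℝ), 0 < c → F (fun ω => c * X ω) = c * F X)
    (hadd : ∀ X Y : Ω → ℝ, F X + F Y ≤ F (fun ω => X ω + Y ω)) :
    Coherent (fun X => decide (0 ≤ F X)) := by
  refine ⟨fun X hX => decide_eq_true (hpos X hX), fun X c hc => ?_, fun X Y hX hY => ?_⟩
  · simp only [hsmul X c hc, mul_nonneg_iff_of_pos_left hc]
  · simp only [decide_eq_true_eq] at hX hY ⊢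
    linarith [hadd X Y]

theorem BConsistent.buy_add_le {R : (Ω → ℝ) → Bool} (hR : BConsistent R)
    {X₁ X₂ Y₁ Y₂ : Ω → ℝ}
    (h : ∀ E : Set Ω, E.Nonempty →
      sInf (X₁ '' E) + sInf (X₂ '' E) ≤ sInf (Y₁ '' E) + sInf (Y₂ '' E)) :
    Buy R X₁ + Buy R X₂ ≤ Buy R Y₁ + Buy R Y₂ := by
  simpa [Fin.sum_univ_two] using hR 2 2 ![X₁, X₂] ![Y₁, Y₂] (by simpa [Fin.sum_univ_two] using h)

namespace BuyEx

theorem sub_const (X : Fin 4 → ℝ) (a : ℝ) : BuyEx (fun ω => X ω - a) = BuyEx X - a := by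
  rw [BuyEx, BuyEx, ← min_sub_sub_right]
  ring_nf

theorem nonneg_of_pos (X : Fin 4 → ℝ) (hX : ∀ ω, 0 < X ω) : 0 ≤ BuyEx X := by
  have := hX 0; have := hX 1; have := hX 2; have := hX 3
  exact le_min (by linarith) (by linarith)

theorem const_mul (X : Fin 4 → ℝ) {c : ℝ} (hc : 0 < c) :
    BuyEx (fun ω => c * X ω) = c * BuyEx X := by
  rw [BuyEx, BuyEx, mul_min_of_nonneg _ _ hc.le]
  ring_nf

theorem add_le (X Y : Fin 4 → ℝ) : BuyEx X + BuyEx Y ≤ BuyEx (fun ω => X ω + Y ω) :=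
  (min_add_min_le_min_add_add ..).trans_eq (by rw [BuyEx]; ring_nf)

end BuyEx

theorem example_not_BConsistent :
    (∀ S : Set (Fin 4), S.Nonempty →
      sInf (ind ({1, 2, 3} : Set (Fin 4)) '' S) + sInf (ind ({1} : Set (Fin 4)) '' S) ≥
      sInf (ind ({1, 2} : Set (Fin 4)) '' S) + sInf (ind ({1, 3} : Set (Fin 4)) '' S)) ∧
    BuyEx (ind ({1, 2, 3} : Set (Fin 4))) + BuyEx (ind ({1} : Set (Fin 4))) = 3 / 4 ∧
    BuyEx (ind ({1, 2} : Set (Fin 4))) + BuyEx (ind ({1, 3} : Set (Fin 4))) = 1 ∧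
    (3 / 4 : ℝ) < 1 ∧
    Coherent (fun X => decide (0 ≤ BuyEx X)) ∧
    ¬ BConsistent (fun X => decide (0 ≤ BuyEx X)) := by
  have hunion : ({1, 2} ∪ {1, 3} : Set (Fin 4)) = {1, 2, 3} := by
    ext x; fin_cases x <;> simp
  have hinter : ({1, 2} ∩ {1, 3} : Set (Fin 4)) = {1} := by
    ext x; fin_cases x <;> simp
  have hguaranteed (S : Set (Fin 4)) (hS : S.Nonempty) :=
    hunion ▸ hinter ▸ sInf_image_ind_add_le_union_inter ({1, 2} : Set (Fin 4)) {1, 3} hS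
  have hlow : BuyEx (ind ({1, 2, 3} : Set (Fin 4))) + BuyEx (ind ({1} : Set (Fin 4))) = 3 / 4 := by
    norm_num [BuyEx, ind, Set.indicator_apply, Fin.ext_iff]
  have hhigh : BuyEx (ind ({1, 2} : Set (Fin 4))) + BuyEx (ind ({1, 3} : Set (Fin 4))) = 1 := by
    norm_num [BuyEx, ind, Set.indicator_apply, Fin.ext_iff]
  refine ⟨hguaranteed, hlow, hhigh, by norm_num,
    coherent_decide_nonneg BuyEx.nonneg_of_pos (fun X _ hc => BuyEx.const_mul X hc) BuyEx.add_le,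
    fun hB => ?_⟩
  have := hB.buy_add_le hguaranteed
  simp only [buy_decide_nonneg BuyEx.sub_const] at this
  linarith
end

section
/- If R is a coherent and B-consistent betting function, then the function Bel(A) := Buy_R(1_A) satisfies Bel(∅)=0, Bel(Ω)=1, and complete monotonicity: for all A₁,…,A_N ⊆ Ω, Bel(⋃ᵢ Aᵢ) ≥ Σ_{∅≠I⊆{1,…,N}} (-1)^{|I|+1} Bel(⋂_{i∈I} Aᵢ). -/
open scoped Classical

variable {Ω : Type*}

-- AUX START

lemma R_const_iff [Nonempty Ω] (R : (Ω → ℝ) → Bool) (hR : IsBettingFunction R)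
    (hC : Coherent R) (t : ℝ) : R (fun _ : Ω => t) = true ↔ 0 ≤ t := by
  obtain ⟨α₀, h1, h2⟩ := hR (fun _ : Ω => (0:ℝ))
  have hz : ∀ α : ℝ, (fun ω : Ω => (0:ℝ) + α) = (fun _ : Ω => α) := by
    intro α; funext ω; ring
  have hneg : ∀ s : ℝ, s < 0 → R (fun _ : Ω => s) = false := by
    intro s hs
    by_contra hcon
    have hs' : R (fun _ : Ω => s) = true := by
      cases h : R (fun _ : Ω => s) with
      | false => exact absurd h hcon
      | true => rfl
    have hall : ∀ u : ℝ, u < 0 → R (fun _ : Ω => u) = true := by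
      intro u hu
      have hpos : 0 < u / s := div_pos_iff.mpr (Or.inr ⟨hu, hs⟩)
      have := hC.2.1 (fun _ : Ω => s) (u / s) hpos
      have heq : (fun ω : Ω => u / s * s) = (fun _ : Ω => u) := by
        funext ω; field_simp [ne_of_lt hs]
      rw [heq] at this
      rw [this, hs']
    set α := min (α₀ - 1) (-1) with hα
    have hlt : α < α₀ := lt_of_le_of_lt (min_le_left _ _) (by linarith)
    have hlt0 : α < 0 := lt_of_le_of_lt (min_le_right _ _) (by norm_num)
    have hf := h1 α hlt
    rw [hz α] at hf
    rw [hall α hlt0] at hf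
    exact Bool.true_eq_false.mp hf
  have hα₀0 : α₀ = 0 := by
    by_contra hne
    rcases lt_or_gt_of_ne hne with hlt | hgt
    · have := h2 α₀ le_rfl
      rw [hz α₀] at this
      rw [hneg α₀ hlt] at this
      exact Bool.false_eq_true.mp this
    · have := h1 (α₀ / 2) (by linarith)
      rw [hz (α₀/2)] at this
      have hp : R (fun _ : Ω => α₀ / 2) = true :=
        hC.1 _ (fun ω => by positivity)
      rw [hp] at this
      exact Bool.true_eq_false.mp this
  constructor
  · intro h
    by_contra hneg'
    push_neg at hneg'
    rw [hneg t hneg'] at h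
    exact Bool.false_eq_true.mp h
  · intro h
    have := h2 t (hα₀0 ▸ h)
    rwa [hz t] at this

lemma Buy_const [Nonempty Ω] (R : (Ω → ℝ) → Bool) (hR : IsBettingFunction R)
    (hC : Coherent R) (c : ℝ) : Buy R (fun _ : Ω => c) = c := by
  have : {α : ℝ | R (fun _ : Ω => c - α) = true} = Set.Iic c := by
    ext α
    simp only [Set.mem_setOf_eq, Set.mem_Iic, R_const_iff R hR hC, sub_nonneg]
  unfold Buy
  rw [show {α : ℝ | R (fun ω : Ω => (fun _ : Ω => c) ω - α) = true}
      = {α : ℝ | R (fun _ : Ω => c - α) = true} from rfl, this, csSup_Iic]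

lemma BConsistent_finset (R : (Ω → ℝ) → Bool) (hB : BConsistent R)
    {ι κ : Type*} (s : Finset ι) (t : Finset κ) (X : ι → Ω → ℝ) (Y : κ → Ω → ℝ)
    (h : ∀ E : Set Ω, E.Nonempty →
      ∑ i ∈ s, sInf (X i '' E) ≤ ∑ j ∈ t, sInf (Y j '' E)) :
    ∑ i ∈ s, Buy R (X i) ≤ ∑ j ∈ t, Buy R (Y j) := by
  have hs : ∀ f : ι → ℝ, ∑ i : Fin s.card, f (s.equivFin.symm i : ι) = ∑ i ∈ s, f i := by
    intro f
    rw [Equiv.sum_comp s.equivFin.symm (fun x : {x // x ∈ s} => f x),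
      Finset.sum_coe_sort]
  have ht : ∀ f : κ → ℝ, ∑ j : Fin t.card, f (t.equivFin.symm j : κ) = ∑ j ∈ t, f j := by
    intro f
    rw [Equiv.sum_comp t.equivFin.symm (fun x : {x // x ∈ t} => f x),
      Finset.sum_coe_sort]
  have := hB s.card t.card (fun i => X (s.equivFin.symm i)) (fun j => Y (t.equivFin.symm j))
    (by
      intro E hE
      calc ∑ i : Fin s.card, sInf (X (s.equivFin.symm i : ι) '' E)
          = ∑ i ∈ s, sInf (X i '' E) := hs (fun i => sInf (X i '' E))
        _ ≤ ∑ j ∈ t, sInf (Y j '' E) := h E hE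
        _ = ∑ j : Fin t.card, sInf (Y (t.equivFin.symm j : κ) '' E) := (ht (fun j => sInf (Y j '' E))).symm)
  calc ∑ i ∈ s, Buy R (X i) = ∑ i : Fin s.card, Buy R (X (s.equivFin.symm i : ι)) := (hs (fun i => Buy R (X i))).symm
    _ ≤ ∑ j : Fin t.card, Buy R (Y (t.equivFin.symm j : κ)) := this
    _ = ∑ j ∈ t, Buy R (Y j) := ht (fun j => Buy R (Y j))

lemma sInf_ind_image (A E : Set Ω) (hE : E.Nonempty) :
    sInf (ind A '' E) = if E ⊆ A then 1 else 0 := by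
  split_ifs with h
  · have himg : ind A '' E = {1} := by
      apply Set.Subset.antisymm
      · rintro b ⟨x, hx, rfl⟩
        simp [ind, Set.indicator_of_mem (h hx)]
      · rintro b rfl
        obtain ⟨x, hx⟩ := hE
        exact ⟨x, hx, by simp [ind, Set.indicator_of_mem (h hx)]⟩
    rw [himg, csInf_singleton]
  · rw [Set.not_subset] at h
    obtain ⟨x, hxE, hxA⟩ := h
    apply le_antisymm
    · have hbdd : BddBelow (ind A '' E) := by
        refine ⟨0, ?_⟩
        rintro b ⟨y, _, rfl⟩
        exact Set.indicator_nonneg (fun _ _ => zero_le_one) y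
      exact csInf_le hbdd ⟨x, hxE, by simp [ind, Set.indicator_of_notMem hxA]⟩
    · apply le_csInf (hE.image _)
      rintro b ⟨y, _, rfl⟩
      exact Set.indicator_nonneg (fun _ _ => zero_le_one) y

lemma parity_split {N : ℕ} (v : Finset (Fin N) → ℝ) :
    ∑ I ∈ (Finset.univ : Finset (Finset (Fin N))).filter (fun I => I ≠ ∅),
      (-1 : ℝ) ^ (I.card + 1) * v I
    = ∑ I ∈ (Finset.univ : Finset (Finset (Fin N))).filter (fun I => Odd I.card), v I
      - ∑ I ∈ (Finset.univ : Finset (Finset (Fin N))).filter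
          (fun I => I ≠ ∅ ∧ ¬ Odd I.card), v I := by
  rw [← Finset.sum_filter_add_sum_filter_not
      ((Finset.univ : Finset (Finset (Fin N))).filter (fun I => I ≠ ∅))
      (fun I => Odd I.card) (fun I => (-1 : ℝ) ^ (I.card + 1) * v I)]
  rw [Finset.filter_filter, Finset.filter_filter]
  have e1 : (Finset.univ : Finset (Finset (Fin N))).filter (fun I => I ≠ ∅ ∧ Odd I.card)
      = (Finset.univ : Finset (Finset (Fin N))).filter (fun I => Odd I.card) := by
    apply Finset.filter_congr
    intro I _
    simp only [ne_eq, eq_iff_iff, and_iff_right_iff_imp]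
    intro hodd hI
    rw [hI] at hodd
    simp at hodd
  rw [e1]
  have e2 : ∀ I ∈ (Finset.univ : Finset (Finset (Fin N))).filter (fun I => Odd I.card),
      (-1 : ℝ) ^ (I.card + 1) * v I = v I := by
    intro I hI
    rw [Finset.mem_filter] at hI
    rw [Even.neg_one_pow (hI.2.add_one), one_mul]
  have e3 : ∀ I ∈ (Finset.univ : Finset (Finset (Fin N))).filter
      (fun I => I ≠ ∅ ∧ ¬ Odd I.card),
      (-1 : ℝ) ^ (I.card + 1) * v I = - v I := by
    intro I hI
    rw [Finset.mem_filter] at hI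
    have : Odd (I.card + 1) := (Nat.not_odd_iff_even.mp hI.2.2).add_one
    rw [Odd.neg_one_pow this, neg_one_mul]
  rw [Finset.sum_congr rfl e2, Finset.sum_congr rfl e3, Finset.sum_neg_distrib]
  ring

lemma incl_excl {N : ℕ} (β : Fin N → ℝ) :
    ∑ I ∈ (Finset.univ : Finset (Finset (Fin N))).filter (fun I => I ≠ ∅),
      (-1 : ℝ) ^ (I.card + 1) * ∏ i ∈ I, β i
    = 1 - ∏ i, (1 - β i) := by
  have key : ∏ i, (1 - β i)
      = ∑ I : Finset (Fin N), (-1 : ℝ) ^ I.card * ∏ i ∈ I, β i := by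
    have h1 : ∀ i : Fin N, (1 : ℝ) - β i = (-β i) + 1 := fun i => by ring
    calc ∏ i, (1 - β i) = ∏ i, ((-β i) + 1) := by
          exact Finset.prod_congr rfl (fun i _ => h1 i)
      _ = ∑ I ∈ (Finset.univ : Finset (Fin N)).powerset,
            (∏ i ∈ I, (-β i)) * ∏ i ∈ Finset.univ \ I, (1:ℝ) :=
          Finset.prod_add _ _ _
      _ = ∑ I : Finset (Fin N), (-1 : ℝ) ^ I.card * ∏ i ∈ I, β i := by
          rw [Finset.powerset_univ]
          apply Finset.sum_congr rfl
          intro I _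
          rw [Finset.prod_const_one, mul_one]
          calc ∏ i ∈ I, (-β i) = ∏ i ∈ I, ((-1 : ℝ) * β i) := by
                exact Finset.prod_congr rfl (fun i _ => by ring)
            _ = (∏ i ∈ I, (-1 : ℝ)) * ∏ i ∈ I, β i := Finset.prod_mul_distrib
            _ = (-1 : ℝ) ^ I.card * ∏ i ∈ I, β i := by rw [Finset.prod_const]
  have split := Finset.sum_filter_add_sum_filter_not
      (Finset.univ : Finset (Finset (Fin N))) (fun I => I ≠ ∅)
      (fun I => (-1 : ℝ) ^ I.card * ∏ i ∈ I, β i)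
  have hcompl : (Finset.univ : Finset (Finset (Fin N))).filter (fun I => ¬ I ≠ ∅)
      = {∅} := by
    ext I; simp
  have hne : ∑ I ∈ (Finset.univ : Finset (Finset (Fin N))).filter (fun I => I ≠ ∅),
      (-1 : ℝ) ^ I.card * ∏ i ∈ I, β i
      = ∏ i, (1 - β i) - 1 := by
    rw [key]
    rw [← split, hcompl]
    simp
  have hsign : ∀ I : Finset (Fin N),
      (-1 : ℝ) ^ (I.card + 1) * ∏ i ∈ I, β i
      = -((-1 : ℝ) ^ I.card * ∏ i ∈ I, β i) := by
    intro I; rw [pow_succ]; ring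
  rw [Finset.sum_congr rfl (fun I _ => hsign I), Finset.sum_neg_distrib, hne]
  ring

theorem buy_is_belief_function [Fintype Ω] [Nonempty Ω] (R : (Ω → ℝ) → Bool)
    (hR : IsBettingFunction R) (hC : Coherent R) (hB : BConsistent R) :
    Buy R (ind (∅ : Set Ω)) = 0 ∧ Buy R (ind (Set.univ : Set Ω)) = 1 ∧
    CompletelyMonotone (fun A : Set Ω => Buy R (ind A)) := by
  refine ⟨?_, ?_, ?_⟩
  · have : ind (∅ : Set Ω) = (fun _ : Ω => (0:ℝ)) := by
      funext ω; simp [ind]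
    rw [this, Buy_const R hR hC]
  · have : ind (Set.univ : Set Ω) = (fun _ : Ω => (1:ℝ)) := by
      funext ω; simp [ind]
    rw [this, Buy_const R hR hC]
  · intro N A
    simp only []
    rw [parity_split (fun I => Buy R (ind (⋂ i ∈ I, A i))), sub_le_iff_le_add]
    set odds := (Finset.univ : Finset (Finset (Fin N))).filter (fun I => Odd I.card) with hodds
    set evs := (Finset.univ : Finset (Finset (Fin N))).filter
        (fun I => I ≠ ∅ ∧ ¬ Odd I.card) with hevs
    set Y : Option (Finset (Fin N)) → Ω → ℝ :=
      fun o => o.elim (ind (⋃ i, A i)) (fun I => ind (⋂ i ∈ I, A i)) with hY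
    have hnone : (none : Option (Finset (Fin N))) ∉ evs.image some := by simp
    have hinj : ∀ a ∈ evs, ∀ b ∈ evs, some a = some b → a = b :=
      fun a _ b _ h => Option.some_injective _ h
    have hsum : ∀ g : Option (Finset (Fin N)) → ℝ,
        ∑ j ∈ insert none (evs.image some), g j = g none + ∑ I ∈ evs, g (some I) := by
      intro g
      rw [Finset.sum_insert hnone, Finset.sum_image hinj]
    calc ∑ I ∈ odds, Buy R (ind (⋂ i ∈ I, A i))
        ≤ ∑ j ∈ insert none (evs.image some), Buy R (Y j) := by
          apply BConsistent_finset R hB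
          intro E hE
          rw [hsum (fun j => sInf (Y j '' E))]
          have hc : ∀ I : Finset (Fin N),
              sInf (ind (⋂ i ∈ I, A i) '' E) = if ∀ i ∈ I, E ⊆ A i then 1 else 0 := by
            intro I
            rw [sInf_ind_image _ _ hE]
            have hiff : (E ⊆ ⋂ i ∈ I, A i) ↔ (∀ i ∈ I, E ⊆ A i) := by
              constructor
              · intro hsub i hi
                exact hsub.trans (Set.biInter_subset_of_mem hi)
              · intro hP x hx
                simp only [Set.mem_iInter]
                intro i hi
                exact hP i hi hx
            by_cases hP : ∀ i ∈ I, E ⊆ A i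
            · rw [if_pos (hiff.mpr hP), if_pos hP]
            · rw [if_neg (fun h => hP (hiff.mp h)), if_neg hP]
          show ∑ I ∈ odds, sInf (ind (⋂ i ∈ I, A i) '' E)
            ≤ sInf (ind (⋃ i, A i) '' E) + ∑ I ∈ evs, sInf (ind (⋂ i ∈ I, A i) '' E)
          rw [sInf_ind_image _ _ hE]
          have hrw : ∀ I : Finset (Fin N), sInf (ind (⋂ i ∈ I, A i) '' E)
              = ∏ i ∈ I, (if E ⊆ A i then (1:ℝ) else 0) := by
            intro I
            rw [hc I]
            by_cases hP : ∀ i ∈ I, E ⊆ A i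
            · rw [if_pos hP, Finset.prod_boole, if_pos hP]
            · rw [if_neg hP, Finset.prod_boole, if_neg hP]
          rw [Finset.sum_congr rfl (fun I _ => hrw I),
            Finset.sum_congr rfl (fun I _ => hrw I)]
          rw [← sub_le_iff_le_add,
            ← parity_split (fun I => ∏ i ∈ I, (if E ⊆ A i then (1:ℝ) else 0)),
            incl_excl (fun i => if E ⊆ A i then (1:ℝ) else 0)]
          by_cases hex : ∃ i, E ⊆ A i
          · obtain ⟨i0, hi0⟩ := hex
            have hp : ∏ i, ((1:ℝ) - if E ⊆ A i then (1:ℝ) else 0) = 0 :=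
              Finset.prod_eq_zero (Finset.mem_univ i0) (by simp [hi0])
            have hU : E ⊆ ⋃ i, A i := hi0.trans (Set.subset_iUnion A i0)
            rw [hp, if_pos hU]
            norm_num
          · push_neg at hex
            have hp : ∏ i, ((1:ℝ) - if E ⊆ A i then (1:ℝ) else 0) = 1 := by
              apply Finset.prod_eq_one
              intro i _
              rw [if_neg (hex i)]
              ring
            rw [hp]
            split_ifs <;> norm_num
      _ = Buy R (ind (⋃ i, A i)) + ∑ I ∈ evs, Buy R (ind (⋂ i ∈ I, A i)) := by
          rw [hsum (fun j => Buy R (Y j))]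
          rfl
end
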